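/- Define Q_n(x) recursively by Q_0(x) = 1, Q_1(x) = x + a_1, and Q_n(x) = (-1)^{n+1} a_n Q_{n-1}(x) + x(x+1) Q_{n-2}(x) for n ≥ 2, where a_1,...,a_n are positive integers. Then Q_n(x) equals the polynomial p_n(x) = x^{r_0} Σ_{k=0}^{m} (-1)^{m-k} x^k (x+1)^k γ_n(n - 2k - r_0) + x^{r_1} Σ_{k=0}^{m-r_1} (-1)^{m-k} x^k (x+1)^k γ_n(n - 2k - r_1), where n = 2m + r_0 with r_0 ∈ {0,1}, r_1 = 1 - r_0, and γ_n(l) = Σ_{t ∈ I(n,l)} a_{t_1}···a_{t_l} with γ_n(0) = 1. -/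

import Mathlib

open Polynomial

/-- `gamma a n l` = Σ over strictly increasing sequences `t : Fin l → {1,...,n}` with
`t i ≡ n + i - l (mod 2)` (1-indexed) of the products `a (t 1) ⋯ a (t l)`. -/
def gamma (a : ℕ → ℤ) (n l : ℕ) : ℤ :=
  ∑ t ∈ Finset.univ.filter (fun t : Fin l → Fin n =>
      (∀ i j : Fin l, i < j → t i < t j) ∧
      (∀ i : Fin l, ((t i : ℕ) + 1 + l) % 2 = (n + ((i : ℕ) + 1)) % 2)),
    ∏ i : Fin l, a ((t i : ℕ) + 1)

/-- `Q_0 = 1`, `Q_1 = x + a₁`, `Q_n = (-1)^{n+1} aₙ Q_{n-1} + x(x+1) Q_{n-2}`. -/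
noncomputable def Q (a : ℕ → ℤ) : ℕ → Polynomial ℤ
  | 0 => 1
  | 1 => X + C (a 1)
  | (n + 2) => (-1) ^ (n + 3) * C (a (n + 2)) * Q a (n + 1) + X * (X + 1) * Q a n

/-- The explicit polynomial `p_n`. -/
noncomputable def pPoly (a : ℕ → ℤ) (n : ℕ) : Polynomial ℤ :=
  X ^ (n % 2) *
    ∑ k ∈ Finset.range (n / 2 + 1),
      (-1) ^ (n / 2 - k) * X ^ k * (X + 1) ^ k * C (gamma a n (n - 2 * k - n % 2)) +
  X ^ (1 - n % 2) *
    ∑ k ∈ Finset.range (n / 2 - (1 - n % 2) + 1),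
      (-1) ^ (n / 2 - k) * X ^ k * (X + 1) ^ k * C (gamma a n (n - 2 * k - (1 - n % 2)))

lemma gamma_zero (a : ℕ → ℤ) (n : ℕ) : gamma a n 0 = 1 := by
  unfold gamma
  rw [Finset.filter_true_of_mem (fun t _ => ⟨fun i => i.elim0, fun i => i.elim0⟩)]
  simp

lemma gamma_of_lt (a : ℕ → ℤ) {n l : ℕ} (h : n < l) : gamma a n l = 0 := by
  unfold gamma
  rw [Finset.filter_eq_empty_iff.mpr, Finset.sum_empty]
  rintro t - ⟨h1, -⟩
  have inj : Function.Injective t := by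
    intro i j hij
    by_contra hne
    rcases lt_or_gt_of_ne hne with hl | hl
    · exact absurd hij (ne_of_lt (h1 _ _ hl))
    · exact absurd hij.symm (ne_of_lt (h1 _ _ hl))
  have := Fintype.card_le_of_injective t inj
  simp at this; omega

lemma gamma_one_one (a : ℕ → ℤ) : gamma a 1 1 = a 1 := by
  unfold gamma
  rw [Finset.filter_true_of_mem]
  · simp [Finset.sum_unique_nonempty]
  · intro t _
    refine ⟨fun i j hij => absurd (Subsingleton.elim i j) (ne_of_lt hij), fun i => ?_⟩
    have : t i = 0 := Subsingleton.elim _ _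
    have : (t i : ℕ) = 0 := by rw [this]; rfl
    omega

lemma gamma_rec (a : ℕ → ℤ) (n l : ℕ) :
    gamma a (n+2) (l+1) = a (n+2) * gamma a (n+1) l + gamma a n (l+1) := by
  conv_lhs => rw [gamma]
  rw [← Finset.sum_filter_add_sum_filter_not _
      (fun t : Fin (l+1) → Fin (n+2) => t (Fin.last l) = Fin.last (n+1))]
  congr 1
  · -- t ends with the maximal value n+2
    rw [gamma, Finset.mul_sum]
    refine Finset.sum_bij (fun t ht => fun j : Fin l =>
      (⟨(t j.castSucc : ℕ), ?_⟩ : Fin (n+1))) ?_ ?_ ?_ ?_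
    · -- bound
      simp only [Finset.mem_filter, Finset.mem_univ, true_and] at ht
      obtain ⟨⟨h1, h2⟩, hlast⟩ := ht
      have := h1 j.castSucc (Fin.last l) (Fin.castSucc_lt_last j)
      rw [hlast] at this
      exact this
    · -- membership
      intro t ht
      simp only [Finset.mem_filter, Finset.mem_univ, true_and] at ht ⊢
      obtain ⟨⟨h1, h2⟩, hlast⟩ := ht
      refine ⟨fun i j hij => ?_, fun i => ?_⟩
      · exact h1 i.castSucc j.castSucc (by simpa using hij)
      · have := h2 i.castSucc
        simp only [Fin.coe_castSucc] at this
        omega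
    · -- injectivity
      intro t1 ht1 t2 ht2 heq
      simp only [Finset.mem_filter, Finset.mem_univ, true_and] at ht1 ht2
      funext i
      refine Fin.lastCases ?_ (fun j => ?_) i
      · rw [ht1.2, ht2.2]
      · exact Fin.val_injective (by simpa using congrArg Fin.val (congrFun heq j))
    · -- surjectivity
      intro t' ht'
      simp only [Finset.mem_filter, Finset.mem_univ, true_and] at ht'
      obtain ⟨h1, h2⟩ := ht'
      refine ⟨Fin.snoc (fun j => (t' j).castSucc) (Fin.last (n+1)), ?_, ?_⟩
      · simp only [Finset.mem_filter, Finset.mem_univ, true_and]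
        refine ⟨⟨fun i j hij => ?_, fun i => ?_⟩, by simp⟩
        · have hine : i ≠ Fin.last l := by
            intro h; subst h
            exact absurd (lt_of_lt_of_le hij (Fin.le_last j)) (lt_irrefl _)
          obtain ⟨i', hi'⟩ := Fin.exists_castSucc_eq.mpr hine
          rcases Fin.eq_castSucc_or_eq_last j with ⟨j', hj'⟩ | hj'
          · subst hj'
            rw [← hi', Fin.snoc_castSucc, Fin.snoc_castSucc]
            have hij' : i' < j' := by rw [← hi'] at hij; simpa using hij
            simpa using h1 i' j' hij'
          · subst hj'
            rw [← hi', Fin.snoc_castSucc, Fin.snoc_last]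
            exact Fin.castSucc_lt_last _
        · rcases Fin.eq_castSucc_or_eq_last i with ⟨i', hi'⟩ | hi'
          · subst hi'
            rw [Fin.snoc_castSucc]
            have := h2 i'
            simp only [Fin.coe_castSucc]
            omega
          · subst hi'
            rw [Fin.snoc_last]
            simp only [Fin.val_last]
      · funext j
        apply Fin.val_injective
        simp [Fin.snoc_castSucc]
    · -- sums agree
      intro t ht
      simp only [Finset.mem_filter, Finset.mem_univ, true_and] at ht
      rw [Fin.prod_univ_castSucc]
      simp only [ht.2]
      simp only [Fin.val_last]
      rw [mul_comm]
  · -- t avoids the maximal value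
    rw [gamma]
    have key : ∀ t : Fin (l+1) → Fin (n+2), (((∀ i j : Fin (l+1), i < j → t i < t j) ∧
        (∀ i : Fin (l+1), ((t i : ℕ) + 1 + (l+1)) % 2 = ((n+2) + ((i : ℕ) + 1)) % 2)) ∧
        ¬ t (Fin.last l) = Fin.last (n+1)) → ∀ j : Fin (l+1), (t j : ℕ) < n := by
      intro t ⟨⟨h1, h2⟩, hlast⟩ j
      have hlast_lt : (t (Fin.last l) : ℕ) < n := by
        have hb : (t (Fin.last l) : ℕ) < n + 2 := (t (Fin.last l)).isLt
        have hne : (t (Fin.last l) : ℕ) ≠ n + 1 := fun h =>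
          hlast (Fin.val_injective (by simp [h]))
        have hp := h2 (Fin.last l)
        simp only [Fin.val_last] at hp
        omega
      rcases eq_or_lt_of_le (Fin.le_last j) with hj | hj
      · rw [hj]; exact hlast_lt
      · exact lt_trans (h1 j (Fin.last l) hj) hlast_lt
    refine Finset.sum_bij (fun t ht => fun j : Fin (l+1) =>
      (⟨(t j : ℕ), ?_⟩ : Fin n)) ?_ ?_ ?_ ?_
    · -- bound
      simp only [Finset.mem_filter, Finset.mem_univ, true_and] at ht
      exact key t ht j
    · -- membership
      intro t ht
      simp only [Finset.mem_filter, Finset.mem_univ, true_and] at ht ⊢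
      obtain ⟨⟨h1, h2⟩, hlast⟩ := ht
      refine ⟨fun i j hij => by simpa using h1 i j hij, fun i => ?_⟩
      have := h2 i
      omega
    · -- injectivity
      intro t1 ht1 t2 ht2 heq
      funext i
      exact Fin.val_injective (by simpa using congrArg Fin.val (congrFun heq i))
    · -- surjectivity
      intro t' ht'
      simp only [Finset.mem_filter, Finset.mem_univ, true_and] at ht'
      obtain ⟨h1, h2⟩ := ht'
      refine ⟨fun j => ⟨(t' j : ℕ), by omega⟩, ?_, by funext j; apply Fin.val_injective; rfl⟩
      simp only [Finset.mem_filter, Finset.mem_univ, true_and]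
      refine ⟨⟨fun i j hij => by simpa using h1 i j hij, fun i => ?_⟩, fun h => ?_⟩
      · have := h2 i
        omega
      · have := congrArg Fin.val h
        simp only [Fin.val_last] at this
        have := (t' (Fin.last l)).isLt
        omega
    · intro t ht
      rfl

noncomputable def Fpoly (a : ℕ → ℤ) (n r : ℕ) : Polynomial ℤ :=
  ∑ k ∈ Finset.range ((n - r)/2 + 1),
    (-1)^(n/2 - k) * X^k * (X+1)^k * C (gamma a n (n - 2*k - r))

lemma negpow {s t : ℕ} (h : s % 2 = t % 2) : ((-1 : Polynomial ℤ))^s = (-1)^t := by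
  rcases Nat.even_or_odd s with hs | hs
  · have hs2 := Nat.even_iff.mp hs
    rw [hs.neg_one_pow, (Nat.even_iff.mpr (by omega : t % 2 = 0)).neg_one_pow]
  · rw [hs.neg_one_pow, (Nat.odd_iff.mpr (by have := Nat.odd_iff.mp hs; omega : t % 2 = 1)).neg_one_pow]

lemma pPoly_eq (a : ℕ → ℤ) (n : ℕ) : pPoly a n = Fpoly a n 0 + X * Fpoly a n 1 := by
  rcases Nat.even_or_odd n with hn | hn
  · have h0 : n % 2 = 0 := Nat.even_iff.mp hn
    rw [pPoly, Fpoly, Fpoly, h0]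
    rw [show (1 : ℕ) - 0 = 1 from rfl, show (n - 0)/2 = n/2 by omega,
        show n/2 - 1 = (n - 1)/2 by omega]
    simp only [pow_zero, one_mul, pow_one, Nat.sub_zero]
  · have h0 : n % 2 = 1 := Nat.odd_iff.mp hn
    rw [pPoly, Fpoly, Fpoly, h0]
    rw [show (1 : ℕ) - 1 = 0 from rfl, show (n - 1)/2 = n/2 by omega,
        show n/2 - 0 = (n - 0)/2 by omega]
    simp only [pow_zero, one_mul, pow_one, Nat.sub_zero]
    ring

lemma Fpoly_rec (a : ℕ → ℤ) (n r : ℕ) (hr : r ≤ 1) (hrn : r ≤ n) :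
    Fpoly a (n+2) r = (-1)^(n+3) * C (a (n+2)) * Fpoly a (n+1) r
      + X*(X+1) * Fpoly a n r := by
  have hterm1 : (-1:Polynomial ℤ)^(n+3) * C (a (n+2)) * Fpoly a (n+1) r
      = ∑ k ∈ Finset.range ((n+1-r)/2 + 1),
          (-1)^((n+2)/2 - k) * X^k * (X+1)^k * C (a (n+2) * gamma a (n+1) (n+1 - 2*k - r)) := by
    rw [Fpoly, Finset.mul_sum]
    refine Finset.sum_congr rfl (fun k hk => ?_)
    have hk' : k ≤ (n+1-r)/2 := Finset.mem_range_succ_iff.mp hk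
    have hsgn : ((-1:Polynomial ℤ))^(n+3) * (-1)^((n+1)/2 - k) = (-1)^((n+2)/2 - k) := by
      rw [← pow_add]; exact negpow (by omega)
    rw [map_mul, ← hsgn]
    ring
  have hterm2 : X*(X+1) * Fpoly a n r
      = ∑ k ∈ Finset.range ((n+2-r)/2 + 1),
          (-1)^((n+2)/2 - k) * X^k * (X+1)^k * C (gamma a n (n+2 - 2*k - r)) := by
    rw [Fpoly, Finset.mul_sum]
    rw [show (n+2-r)/2 + 1 = ((n-r)/2 + 1) + 1 by omega]
    rw [Finset.sum_range_succ' (fun k =>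
      (-1:Polynomial ℤ)^((n+2)/2 - k) * X^k * (X+1)^k * C (gamma a n (n+2 - 2*k - r))) ((n-r)/2+1)]
    rw [show n + 2 - 2*0 - r = n + 2 - r by omega, gamma_of_lt a (by omega : n < n + 2 - r),
        map_zero, mul_zero, add_zero]
    refine Finset.sum_congr rfl (fun k hk => ?_)
    rw [show (n+2)/2 - (k+1) = n/2 - k by omega, show n+2-2*(k+1)-r = n - 2*k - r by omega]
    ring
  rw [hterm1, hterm2, Fpoly]
  by_cases hp : (n - r) % 2 = 0
  · -- r has same parity as n : last term l = 0 splits off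
    have h1 : (n+1-r)/2 + 1 = (n+2-r)/2 := by omega
    rw [h1, Finset.sum_range_succ, Finset.sum_range_succ
      (fun k => (-1:Polynomial ℤ)^((n+2)/2 - k) * X^k * (X+1)^k * C (gamma a n (n+2 - 2*k - r)))]
    rw [show n+2-2*((n+2-r)/2)-r = 0 by omega, gamma_zero, gamma_zero, ← add_assoc]
    congr 1
    rw [← Finset.sum_add_distrib]
    refine Finset.sum_congr rfl (fun k hk => ?_)
    have hk' : k < (n+2-r)/2 := Finset.mem_range.mp hk
    rw [show n+2-2*k-r = (n+1-2*k-r)+1 by omega, gamma_rec, map_add]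
    ring
  · -- opposite parity : no l = 0 term
    have h1 : (n+1-r)/2 = (n+2-r)/2 := by omega
    rw [h1, ← Finset.sum_add_distrib]
    refine Finset.sum_congr rfl (fun k hk => ?_)
    have hk' : k ≤ (n+2-r)/2 := Finset.mem_range_succ_iff.mp hk
    rw [show n+2-2*k-r = (n+1-2*k-r)+1 by omega, gamma_rec, map_add]
    ring

lemma pPoly_rec (a : ℕ → ℤ) (n : ℕ) (hn : 1 ≤ n) :
    pPoly a (n+2) = (-1)^(n+3) * C (a (n+2)) * pPoly a (n+1) + X*(X+1) * pPoly a n := by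
  rw [pPoly_eq, pPoly_eq, pPoly_eq, Fpoly_rec a n 0 (by omega) (by omega),
      Fpoly_rec a n 1 (by omega) hn]
  ring

lemma gamma21 (a : ℕ → ℤ) : gamma a 2 1 = a 2 := by
  have := gamma_rec a 0 0
  rw [gamma_zero, gamma_of_lt a (by omega : (0:ℕ) < 1)] at this
  linarith

lemma gamma22 (a : ℕ → ℤ) : gamma a 2 2 = a 2 * a 1 := by
  have := gamma_rec a 0 1
  rw [gamma_one_one, gamma_of_lt a (by omega : (0:ℕ) < 2)] at this
  linarith

lemma gamma31 (a : ℕ → ℤ) : gamma a 3 1 = a 3 + a 1 := by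
  have := gamma_rec a 1 0
  rw [gamma_zero, gamma_one_one] at this
  linarith

lemma gamma32 (a : ℕ → ℤ) : gamma a 3 2 = a 3 * a 2 := by
  have := gamma_rec a 1 1
  rw [gamma21, gamma_of_lt a (by omega : (1:ℕ) < 2)] at this
  linarith

lemma gamma33 (a : ℕ → ℤ) : gamma a 3 3 = a 3 * (a 2 * a 1) := by
  have := gamma_rec a 1 2
  rw [gamma22, gamma_of_lt a (by omega : (1:ℕ) < 3)] at this
  linear_combination this

lemma base2 (a : ℕ → ℤ) : Q a 2 = pPoly a 2 := by
  rw [show (2:ℕ) = 0 + 2 from rfl, Q, pPoly_eq, Fpoly, Fpoly]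
  have hQ1 : Q a (0+1) = X + C (a 1) := rfl
  have hQ0 : Q a 0 = 1 := rfl
  rw [hQ1, hQ0]
  norm_num [Finset.sum_range_succ]
  rw [gamma22, gamma_zero, gamma21]
  push_cast [map_mul]
  ring

lemma base3 (a : ℕ → ℤ) : Q a 3 = pPoly a 3 := by
  rw [show (3:ℕ) = 1 + 2 from rfl, Q, pPoly_eq, Fpoly, Fpoly]
  have hQ2 : Q a (1+1) = Q a (0+2) := rfl
  rw [hQ2]
  have hQ02 : Q a (0+2) = (-1)^(0+3) * C (a (0+2)) * Q a (0+1) + X*(X+1)*Q a 0 := by rw [Q, Q, Q]; rfl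
  have hQ1 : Q a (0+1) = X + C (a 1) := rfl
  have hQ0 : Q a 0 = 1 := rfl
  rw [hQ02, hQ1, hQ0]
  norm_num [Finset.sum_range_succ]
  rw [gamma33, gamma_zero, gamma31, gamma32]
  push_cast [map_mul, map_add]
  ring

theorem stmt2 (a : ℕ → ℤ) (ha : ∀ i, 0 < a i) (n : ℕ) (hn : 2 ≤ n) :
    Q a n = pPoly a n := by
  obtain ⟨m, rfl⟩ : ∃ m, n = m + 2 := ⟨n - 2, by omega⟩
  clear hn
  induction m using Nat.strong_induction_on with
  | _ m ih =>
    match m with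
    | 0 => exact base2 a
    | 1 => exact base3 a
    | (k+2) =>
      rw [Q, pPoly_rec a (k+2) (by omega)]
      rw [show k+2+1 = (k+1)+2 by omega, ih (k+1) (by omega), ih k (by omega)]
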